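/- arXiv:1804.01370 — 3 statements merged into one kernel-verified Lean document; each statement's English description precedes it below -/
import Mathlib

section
/- Let K be a compact topological space and X a Banach space. If W is a dense subset of C(K, ℝ) and Y is a dense subset of X, then the set of functions of the form f = ∑_{j=1}^n f_j ⊗ x_j with f_j ∈ W and x_j ∈ Y (i.e., k ↦ ∑_j f_j(k) • x_j) is dense in C(K, X) with the supremum norm. -/
/-- If `W ⊆ C(K, ℝ)` and `Y ⊆ X` are dense, then the functions of the form
`k ↦ ∑ j, f j k • x j` with `f j ∈ W`, `x j ∈ Y` are dense in `C(K, X)`. -/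
theorem tensor_products_dense {K X : Type*} [TopologicalSpace K] [CompactSpace K]
    [NormedAddCommGroup X] [NormedSpace ℝ X]
    (W : Set C(K, ℝ)) (Y : Set X) (hW : Dense W) (hY : Dense Y) :
    Dense {g : C(K, X) | ∃ (n : ℕ) (f : Fin n → C(K, ℝ)) (x : Fin n → X),
      (∀ j, f j ∈ W) ∧ (∀ j, x j ∈ Y) ∧ ∀ k : K, g k = ∑ j, f j k • x j} := by
  rw [Metric.dense_iff]
  intro g ε hε
  have hε4 : 0 < ε / 4 := by linarith
  -- finite subcover by ε/4-balls
  set U : K → Set K := fun i => {k | dist (g k) (g i) < ε / 4} with hU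
  have hUopen : ∀ i, IsOpen (U i) := fun i =>
    isOpen_lt ((map_continuous g).dist continuous_const) continuous_const
  obtain ⟨t, ht⟩ := isCompact_univ.elim_finite_subcover U hUopen
    (fun k _ => Set.mem_iUnion.2 ⟨k, by simp [hU]; positivity⟩)
  -- partition of unity
  set φ : K → C(K, ℝ) := fun i =>
    ⟨fun k => max 0 (ε / 4 - dist (g k) (g i)),
      continuous_const.max
        (continuous_const.sub ((map_continuous g).dist continuous_const))⟩ with hφ
  have hφnn : ∀ i k, 0 ≤ φ i k := fun i k => le_max_left _ _
  set S : C(K, ℝ) := ∑ i ∈ t, φ i with hS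
  have hSapp : ∀ k, S k = ∑ i ∈ t, φ i k := fun k => by
    simp [hS]
  have hSpos : ∀ k, 0 < S k := by
    intro k
    obtain ⟨i, hit, hik⟩ := Set.mem_iUnion₂.1 (ht (Set.mem_univ k))
    rw [hSapp]
    refine Finset.sum_pos' (fun j _ => hφnn j k) ⟨i, hit, ?_⟩
    have : dist (g k) (g i) < ε / 4 := hik
    simp only [hφ, ContinuousMap.coe_mk]
    rw [lt_max_iff]
    right; linarith
  set ψ : K → C(K, ℝ) := fun i =>
    ⟨fun k => φ i k / S k,
      ((φ i).continuous).div S.continuous (fun k => (hSpos k).ne')⟩ with hψ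
  have hψnn : ∀ i k, 0 ≤ ψ i k := fun i k =>
    div_nonneg (hφnn i k) (hSpos k).le
  have hψsum : ∀ k, ∑ i ∈ t, ψ i k = 1 := by
    intro k
    simp only [hψ, ContinuousMap.coe_mk]
    rw [← Finset.sum_div, ← hSapp, div_self (hSpos k).ne']
  have hψle : ∀ i ∈ t, ∀ k, ψ i k ≤ 1 := by
    intro i hit k
    calc ψ i k ≤ ∑ j ∈ t, ψ j k :=
          Finset.single_le_sum (fun j _ => hψnn j k) hit
      _ = 1 := hψsum k
  -- key: where ψ i is positive, g is ε/4-close to g i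
  have hkey : ∀ i k, ψ i k * ‖g i - g k‖ ≤ ψ i k * (ε / 4) := by
    intro i k
    rcases eq_or_lt_of_le (hψnn i k) with h0 | hpos
    · simp [← h0]
    · refine mul_le_mul_of_nonneg_left ?_ (hψnn i k)
      have hφpos : 0 < φ i k := by
        by_contra h
        push_neg at h
        have : φ i k = 0 := le_antisymm h (hφnn i k)
        simp [hψ, this] at hpos
      have : dist (g k) (g i) < ε / 4 := by
        simp only [hφ, ContinuousMap.coe_mk, lt_max_iff] at hφpos
        rcases hφpos with h | h
        · exact absurd h (lt_irrefl 0)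
        · linarith
      rw [← dist_eq_norm, dist_comm]
      exact this.le
  -- choose δ
  set B : ℝ := ∑ i ∈ t, (‖g i‖ + 2) with hB
  have hBnn : 0 ≤ B := Finset.sum_nonneg fun i _ => by positivity
  set δ : ℝ := min 1 (ε / (2 * (B + 1))) with hδ
  have hδpos : 0 < δ := lt_min one_pos (by positivity)
  have hδ1 : δ ≤ 1 := min_le_left _ _
  have hδB : δ * B ≤ ε / 2 := by
    have h1 : δ ≤ ε / (2 * (B + 1)) := min_le_right _ _
    have h2 : δ * B ≤ (ε / (2 * (B + 1))) * B :=
      mul_le_mul_of_nonneg_right h1 hBnn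
    calc δ * B ≤ (ε / (2 * (B + 1))) * B := h2
      _ ≤ ε / 2 := by
          rw [div_mul_eq_mul_div, div_le_div_iff₀ (by positivity) (by positivity)]
          nlinarith [hBnn]
  -- choose approximants from W and Y
  have hWc : ∀ i : K, ∃ w, w ∈ W ∧ dist w (ψ i) < δ := by
    intro i
    obtain ⟨w, hw1, hw2⟩ := Metric.dense_iff.1 hW (ψ i) δ hδpos
    exact ⟨w, hw2, Metric.mem_ball.1 hw1⟩
  have hYc : ∀ i : K, ∃ y, y ∈ Y ∧ dist y (g i) < δ := by
    intro i
    obtain ⟨y, hy1, hy2⟩ := Metric.dense_iff.1 hY (g i) δ hδpos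
    exact ⟨y, hy2, Metric.mem_ball.1 hy1⟩
  choose f hfW hfd using hWc
  choose x hxY hxd using hYc
  -- candidate function
  set h : C(K, X) :=
    ⟨fun k => ∑ i ∈ t, f i k • x i,
      continuous_finset_sum _ fun i _ => ((f i).continuous).smul continuous_const⟩ with hh
  refine ⟨h, Metric.mem_ball.2 ?_, ?_⟩
  · -- distance estimate
    have hpt : ∀ k, dist (h k) (g k) ≤ 3 * ε / 4 := by
      intro k
      set p : X := ∑ i ∈ t, ψ i k • g i with hp
      have hA : dist p (g k) ≤ ε / 4 := by
        have heq : p - g k = ∑ i ∈ t, ψ i k • (g i - g k) := by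
          simp only [smul_sub, Finset.sum_sub_distrib, hp]
          rw [← Finset.sum_smul, hψsum k, one_smul]
        rw [dist_eq_norm, heq]
        calc ‖∑ i ∈ t, ψ i k • (g i - g k)‖ ≤ ∑ i ∈ t, ‖ψ i k • (g i - g k)‖ :=
              norm_sum_le _ _
          _ ≤ ∑ i ∈ t, ψ i k * (ε / 4) := by
              refine Finset.sum_le_sum fun i _ => ?_
              rw [norm_smul, Real.norm_eq_abs, abs_of_nonneg (hψnn i k)]
              exact hkey i k
          _ = (∑ i ∈ t, ψ i k) * (ε / 4) := by rw [Finset.sum_mul]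
          _ = ε / 4 := by rw [hψsum k, one_mul]
      have hBnd : dist (h k) p ≤ δ * B := by
        have heq : h k - p = ∑ i ∈ t, ((f i k - ψ i k) • g i + f i k • (x i - g i)) := by
          simp only [hh, ContinuousMap.coe_mk, hp, ← Finset.sum_sub_distrib]
          refine Finset.sum_congr rfl fun i _ => ?_
          simp only [sub_smul, smul_sub]
          abel
        rw [dist_eq_norm, heq]
        calc ‖∑ i ∈ t, ((f i k - ψ i k) • g i + f i k • (x i - g i))‖
            ≤ ∑ i ∈ t, ‖(f i k - ψ i k) • g i + f i k • (x i - g i)‖ := norm_sum_le _ _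
          _ ≤ ∑ i ∈ t, δ * (‖g i‖ + 2) := by
              refine Finset.sum_le_sum fun i hit => ?_
              have h1 : |f i k - ψ i k| ≤ δ := by
                have := ContinuousMap.dist_apply_le_dist (f := f i) (g := ψ i) k
                rw [Real.dist_eq] at this
                exact this.trans (hfd i).le
              have h2 : |f i k| ≤ 2 := by
                have := abs_sub_abs_le_abs_sub (f i k) (ψ i k)
                have h3 : |ψ i k| ≤ 1 := by
                  rw [abs_of_nonneg (hψnn i k)]; exact hψle i hit k
                have : |f i k| ≤ |ψ i k| + |f i k - ψ i k| := by
                  calc |f i k| = |ψ i k + (f i k - ψ i k)| := by ring_nf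
                    _ ≤ |ψ i k| + |f i k - ψ i k| := abs_add_le _ _
                linarith
              have h4 : ‖x i - g i‖ ≤ δ := by
                rw [← dist_eq_norm]; exact (hxd i).le
              calc ‖(f i k - ψ i k) • g i + f i k • (x i - g i)‖
                  ≤ ‖(f i k - ψ i k) • g i‖ + ‖f i k • (x i - g i)‖ := norm_add_le _ _
                _ = |f i k - ψ i k| * ‖g i‖ + |f i k| * ‖x i - g i‖ := by
                    rw [norm_smul, norm_smul, Real.norm_eq_abs, Real.norm_eq_abs]
                _ ≤ δ * ‖g i‖ + 2 * δ := by
                    have := norm_nonneg (g i)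
                    have := abs_nonneg (f i k)
                    nlinarith [norm_nonneg (x i - g i), abs_nonneg (f i k - ψ i k)]
                _ = δ * (‖g i‖ + 2) := by ring
          _ = δ * B := by rw [hB, Finset.mul_sum]
      calc dist (h k) (g k) ≤ dist (h k) p + dist p (g k) := dist_triangle _ _ _
        _ ≤ δ * B + ε / 4 := add_le_add hBnd hA
        _ ≤ ε / 2 + ε / 4 := by linarith
        _ = 3 * ε / 4 := by ring
    have : dist h g ≤ 3 * ε / 4 :=
      (ContinuousMap.dist_le (by positivity)).2 hpt
    linarith
  · -- membership in the set
    refine ⟨t.card, fun j => f (t.equivFin.symm j), fun j => x (t.equivFin.symm j),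
      fun j => hfW _, fun j => hxY _, ?_⟩
    intro k
    simp only [hh, ContinuousMap.coe_mk]
    rw [← Finset.sum_coe_sort t (fun i => f i k • x i)]
    exact (Equiv.sum_comp t.equivFin.symm (fun i : t => f (i : K) k • x (i : K))).symm
end

section
/- Let X be a Banach lattice. Every element x of the positive cone X₊, viewed as an element of the bidual X'' acting on X', is an order continuous positive functional on X': if A ⊆ X' is upwards directed and has a supremum sup A in X', then ⟨sup A, x⟩ = sup_{x' ∈ A} ⟨x', x⟩. Moreover X, viewed inside X'', separates the points of X'. -/
open Set

/-- The canonical order on the dual of a Banach lattice: `f ≤ g` iff `f x ≤ g x` for every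
positive `x`. -/
def dualLE {X : Type*} [NormedAddCommGroup X] [Lattice X] [HasSolidNorm X]
    [IsOrderedAddMonoid X] [NormedSpace ℝ X]
    (f g : X →L[ℝ] ℝ) : Prop := ∀ x : X, 0 ≤ x → f x ≤ g x

/-!
The pointwise supremum `y ↦ sup_{f ∈ A} f y` of a directed family of functionals that is bounded
above is additive on the positive cone, because directedness lets the suprema at `u` and at `v`
be approached by one and the same functional. An additive function on the cone of a lattice-ordered
group extends to an additive map via `y ↦ S y⁺ - S y⁻`; here the extension is bounded
for a solid norm, so it is an element of `X'`. It dominates `A`, hence dominates `sup A`, which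
forces `sup A` to agree with the pointwise supremum on the cone.
-/

section ConeExtension

variable {α β : Type*} [AddCommGroup α] [AddCommGroup β] {S : α → β}

def AddOnNonneg [Preorder α] (S : α → β) : Prop :=
  ∀ u v : α, 0 ≤ u → 0 ≤ v → S (u + v) = S u + S v

theorem AddOnNonneg.map_zero [Preorder α] (hS : AddOnNonneg S) : S 0 = 0 := by
  simpa using hS 0 0 le_rfl le_rfl

theorem AddOnNonneg.sub_eq_sub [Preorder α] (hS : AddOnNonneg S) {a b c d : α} (ha : 0 ≤ a)
    (hb : 0 ≤ b) (hc : 0 ≤ c) (hd : 0 ≤ d) (h : a - b = c - d) :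
    S a - S b = S c - S d := by
  have hsum : S a + S d = S c + S b := by
    rw [← hS a d ha hd, ← hS c b hc hb, sub_eq_sub_iff_add_eq_add.mp h]
  rw [sub_eq_sub_iff_add_eq_add, hsum]

variable [Lattice α] [IsOrderedAddMonoid α]

def coneExtension (S : α → β) (hS : AddOnNonneg S) : α →+ β where
  toFun y := S y⁺ - S y⁻
  map_zero' := by simp
  map_add' y z := by
    have hdecomp : (y + z)⁺ - (y + z)⁻ = (y⁺ + z⁺) - (y⁻ + z⁻) := by
      rw [posPart_sub_negPart, add_sub_add_comm, posPart_sub_negPart, posPart_sub_negPart]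
    rw [hS.sub_eq_sub (posPart_nonneg _) (negPart_nonneg _)
      (add_nonneg (posPart_nonneg _) (posPart_nonneg _))
      (add_nonneg (negPart_nonneg _) (negPart_nonneg _)) hdecomp,
      hS _ _ (posPart_nonneg _) (posPart_nonneg _), hS _ _ (negPart_nonneg _) (negPart_nonneg _)]
    abel

theorem coneExtension_apply (hS : AddOnNonneg S) (y : α) :
    coneExtension S hS y = S y⁺ - S y⁻ :=
  rfl

theorem coneExtension_of_nonneg (hS : AddOnNonneg S) {y : α} (hy : 0 ≤ y) :
    coneExtension S hS y = S y := by
  rw [coneExtension_apply, posPart_eq_self.mpr hy, negPart_eq_zero.mpr hy,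
    hS.map_zero, sub_zero]

end ConeExtension

section NormedLattice

variable {X : Type*} [NormedAddCommGroup X] [Lattice X] [HasSolidNorm X] [IsOrderedAddMonoid X]

theorem norm_posPart_le (y : X) : ‖y⁺‖ ≤ ‖y‖ :=
  HasSolidNorm.solid <| by
    rw [abs_of_nonneg (posPart_nonneg y), ← posPart_add_negPart]
    exact le_add_of_nonneg_right (negPart_nonneg y)

theorem norm_negPart_le (y : X) : ‖y⁻‖ ≤ ‖y‖ :=
  HasSolidNorm.solid <| by
    rw [abs_of_nonneg (negPart_nonneg y), ← posPart_add_negPart]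
    exact le_add_of_nonneg_left (posPart_nonneg y)

theorem norm_coneExtension_le {S : X → ℝ} (hS : AddOnNonneg S) {C : ℝ} (hC : 0 ≤ C)
    (hbound : ∀ y : X, 0 ≤ y → |S y| ≤ C * ‖y‖) (y : X) :
    ‖coneExtension S hS y‖ ≤ 2 * C * ‖y‖ :=
  calc ‖coneExtension S hS y‖ = |S y⁺ - S y⁻| := Real.norm_eq_abs _
    _ ≤ |S y⁺| + |S y⁻| := abs_sub _ _
    _ ≤ C * ‖y⁺‖ + C * ‖y⁻‖ :=
      add_le_add (hbound _ (posPart_nonneg y)) (hbound _ (negPart_nonneg y))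
    _ ≤ C * ‖y‖ + C * ‖y‖ := by
      gcongr <;> [exact norm_posPart_le y; exact norm_negPart_le y]
    _ = 2 * C * ‖y‖ := by ring

variable [NormedSpace ℝ X]

theorem AddOnNonneg.exists_dual_eq {S : X → ℝ} (hS : AddOnNonneg S) {C : ℝ} (hC : 0 ≤ C)
    (hbound : ∀ y : X, 0 ≤ y → |S y| ≤ C * ‖y‖) :
    ∃ b : X →L[ℝ] ℝ, ∀ y : X, 0 ≤ y → b y = S y :=
  ⟨(coneExtension S hS).toRealLinearMap
      (AddMonoidHomClass.continuous_of_bound _ _ (norm_coneExtension_le hS hC hbound)),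
    fun _ hy => coneExtension_of_nonneg hS hy⟩

/-- Only meaningful where the values are bounded above: otherwise `sSup` is the junk value `0`. -/
noncomputable def pointwiseSup (A : Set (X →L[ℝ] ℝ)) (y : X) : ℝ :=
  sSup ((fun f : X →L[ℝ] ℝ => f y) '' A)

variable {A : Set (X →L[ℝ] ℝ)} {s : X →L[ℝ] ℝ}

theorem bddAbove_eval_image (hs : ∀ f ∈ A, dualLE f s) {y : X} (hy : 0 ≤ y) :
    BddAbove ((fun f : X →L[ℝ] ℝ => f y) '' A) :=
  ⟨s y, by rintro _ ⟨f, hf, rfl⟩; exact hs f hf y hy⟩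

theorem le_pointwiseSup (hs : ∀ f ∈ A, dualLE f s) {f : X →L[ℝ] ℝ} (hf : f ∈ A) {y : X}
    (hy : 0 ≤ y) : f y ≤ pointwiseSup A y :=
  le_csSup (bddAbove_eval_image hs hy) ⟨f, hf, rfl⟩

theorem pointwiseSup_le (hA : A.Nonempty) (hs : ∀ f ∈ A, dualLE f s) {y : X} (hy : 0 ≤ y) :
    pointwiseSup A y ≤ s y :=
  csSup_le (hA.image _) (by rintro _ ⟨f, hf, rfl⟩; exact hs f hf y hy)

theorem addOnNonneg_pointwiseSup (hA : A.Nonempty) (hdir : DirectedOn dualLE A)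
    (hs : ∀ f ∈ A, dualLE f s) : AddOnNonneg (pointwiseSup A) := by
  intro u v hu hv
  refine le_antisymm ?_ ?_
  · refine csSup_le (hA.image _) ?_
    rintro _ ⟨f, hf, rfl⟩
    exact (map_add f u v).trans_le <|
      add_le_add (le_pointwiseSup hs hf hu) (le_pointwiseSup hs hf hv)
  · rw [pointwiseSup, pointwiseSup, ← csSup_add (hA.image _) (bddAbove_eval_image hs hu)
      (hA.image _) (bddAbove_eval_image hs hv)]
    refine csSup_le ((hA.image _).add (hA.image _)) ?_
    rintro _ ⟨_, ⟨f, hf, rfl⟩, _, ⟨g, hg, rfl⟩, rfl⟩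
    obtain ⟨h, hh, hfh, hgh⟩ := hdir f hf g hg
    calc f u + g v ≤ h u + h v := add_le_add (hfh u hu) (hgh v hv)
      _ = h (u + v) := (map_add h u v).symm
      _ ≤ pointwiseSup A (u + v) := le_pointwiseSup hs hh (add_nonneg hu hv)

theorem abs_pointwiseSup_le {f₀ : X →L[ℝ] ℝ} (hf₀ : f₀ ∈ A) (hs : ∀ f ∈ A, dualLE f s) {y : X}
    (hy : 0 ≤ y) : |pointwiseSup A y| ≤ (‖f₀‖ + ‖s‖) * ‖y‖ := by
  have hlower : -(‖f₀‖ * ‖y‖) ≤ f₀ y := neg_le_of_abs_le (f₀.le_opNorm y)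
  have hupper : s y ≤ ‖s‖ * ‖y‖ := le_of_abs_le (s.le_opNorm y)
  have hf₀y := le_pointwiseSup hs hf₀ hy
  have hsy := pointwiseSup_le ⟨f₀, hf₀⟩ hs hy
  rw [abs_le, add_mul]
  have := mul_nonneg (norm_nonneg f₀) (norm_nonneg y)
  have := mul_nonneg (norm_nonneg s) (norm_nonneg y)
  constructor <;> linarith

theorem exists_dual_eq_pointwiseSup (hA : A.Nonempty) (hdir : DirectedOn dualLE A)
    (hs : ∀ f ∈ A, dualLE f s) : ∃ b : X →L[ℝ] ℝ, ∀ y : X, 0 ≤ y → b y = pointwiseSup A y :=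
  let ⟨f₀, hf₀⟩ := hA
  (addOnNonneg_pointwiseSup hA hdir hs).exists_dual_eq (by positivity)
    fun _ hy => abs_pointwiseSup_le hf₀ hs hy

end NormedLattice

theorem positive_elements_order_continuous_general {X : Type*} [NormedAddCommGroup X] [Lattice X] [HasSolidNorm X]
    [IsOrderedAddMonoid X]
    [NormedSpace ℝ X] :
    (∀ x : X, 0 ≤ x → ∀ A : Set (X →L[ℝ] ℝ), A.Nonempty → DirectedOn dualLE A →
      ∀ s : X →L[ℝ] ℝ,
        ((∀ f ∈ A, dualLE f s) ∧ ∀ b, (∀ f ∈ A, dualLE f b) → dualLE s b) →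
        s x = sSup ((fun f : X →L[ℝ] ℝ => f x) '' A)) ∧
    (∀ f g : X →L[ℝ] ℝ, f ≠ g → ∃ x : X, f x ≠ g x) := by
  refine ⟨fun x hx A hA hdir s ⟨hub, hlub⟩ => ?_, fun f g hfg => ?_⟩
  · obtain ⟨b, hb⟩ := exists_dual_eq_pointwiseSup hA hdir hub
    have hsb : dualLE s b := hlub b fun f hf y hy => (hb y hy).symm ▸ le_pointwiseSup hub hf hy
    exact le_antisymm ((hsb x hx).trans_eq (hb x hx)) (pointwiseSup_le hA hub hx)
  · by_contra! h
    exact hfg (ContinuousLinearMap.ext h)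

/-- every positive `x ∈ X₊`, regarded as a functional on `X'`, is order
continuous: it maps the supremum of a nonempty upwards directed set in `X'` to the supremum
of the values. Moreover `X` separates the points of `X'`. -/
theorem positive_elements_order_continuous {X : Type*} [NormedAddCommGroup X] [Lattice X] [HasSolidNorm X]
    [IsOrderedAddMonoid X]
    [NormedSpace ℝ X] [CompleteSpace X] :
    (∀ x : X, 0 ≤ x → ∀ A : Set (X →L[ℝ] ℝ), A.Nonempty → DirectedOn dualLE A →
      ∀ s : X →L[ℝ] ℝ,
        ((∀ f ∈ A, dualLE f s) ∧ ∀ b, (∀ f ∈ A, dualLE f b) → dualLE s b) →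
        s x = sSup ((fun f : X →L[ℝ] ℝ => f x) '' A)) ∧
    (∀ f g : X →L[ℝ] ℝ, f ≠ g → ∃ x : X, f x ≠ g x) :=
  positive_elements_order_continuous_general
end

section
/- Let V be a real vector space, U ⊆ V a subspace, and W an ordered vector space with the interpolation property. Let p : V → W be sublinear (p(λv) = λ p(v) for λ ≥ 0 and p(v₁+v₂) ≤ p(v₁)+p(v₂)) and φ : U → W linear with φ ≤ p on U. Then φ extends to a linear map φ̃ : V → W with φ̃ ≤ p on all of V. -/
/-!
By Zorn's lemma it suffices to extend a partial linear map `f` dominated by `p` by one vector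
`v ∉ dom f`. Setting `f̃ (x + t • v) = f x + t • w`, domination of `f̃` amounts, after rescaling
by `|t|`, to `f x - p (x - v) ≤ w ≤ p (y + v) - f y` for all `x, y ∈ dom f`. By subadditivity
of `p` every element on the left is below every element on the right, so the interpolation
property supplies such a `w`.
-/

open Set Submodule

def HasInterpolationProperty (W : Type*) [LE W] : Prop :=
  ∀ A B : Set W, A.Nonempty → B.Nonempty →
    (∀ a ∈ A, ∀ b ∈ B, a ≤ b) → ∃ w : W, (∀ a ∈ A, a ≤ w) ∧ ∀ b ∈ B, w ≤ b

namespace LinearPMap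

variable {𝕜 V W : Type*} [Field 𝕜] [AddCommGroup V] [Module 𝕜 V] [AddCommGroup W] [Module 𝕜 W]
  {p : V → W}

def DominatedBy [LE W] (f : V →ₗ.[𝕜] W) (p : V → W) : Prop :=
  ∀ x : f.domain, f x ≤ p x

theorem lt_supSpanSingleton (f : V →ₗ.[𝕜] W) {v : V} (w : W) (hv : v ∉ f.domain) :
    f < f.supSpanSingleton v w hv := by
  refine (f.left_le_sup _ _).lt_of_ne fun h => hv ?_
  have hv' : v ∈ (f.supSpanSingleton v w hv).domain := mem_sup_right (mem_span_singleton_self v)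
  exact (congrArg domain h).ge hv'

theorem DominatedBy.sSup [LE W] {c : Set (V →ₗ.[𝕜] W)} (hne : c.Nonempty)
    (hc : DirectedOn (· ≤ ·) c) (hdom : ∀ f ∈ c, f.DominatedBy p) :
    (LinearPMap.sSup c hc).DominatedBy p := by
  rintro ⟨x, hx⟩
  obtain ⟨f, hfc, hxf⟩ := (mem_domain_sSup_iff hne hc).1 hx
  calc LinearPMap.sSup c hc ⟨x, hx⟩ = f ⟨x, hxf⟩ := LinearPMap.sSup_apply hc hfc ⟨x, hxf⟩
    _ ≤ p x := hdom f hfc ⟨x, hxf⟩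

section Ordered

variable [PartialOrder W] [IsOrderedAddMonoid W] {f : V →ₗ.[𝕜] W}

theorem DominatedBy.sub_le_sub (hp_add : ∀ x y : V, p (x + y) ≤ p x + p y)
    (hf : f.DominatedBy p) (v : V) (x y : f.domain) :
    f x - p (x - v) ≤ p (y + v) - f y := by
  have hsplit : ((x + y : f.domain) : V) = (x - v) + (y + v) := by
    push_cast
    abel
  rw [sub_le_sub_iff, add_comm (p _)]
  calc f x + f y = f (x + y) := (f.map_add x y).symm
    _ ≤ p ((x - v) + (y + v)) := hsplit ▸ hf (x + y)
    _ ≤ p (x - v) + p (y + v) := hp_add _ _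

variable [LinearOrder 𝕜] [PosSMulMono 𝕜 W]

theorem add_smul_le_of_le_sub (hp_hom : ∀ c : 𝕜, 0 < c → ∀ x : V, p (c • x) = c • p x)
    {v : V} {w : W} (hw : ∀ x : f.domain, w ≤ p (x + v) - f x) (x : f.domain) {c : 𝕜}
    (hc : 0 < c) : f x + c • w ≤ p (x + c • v) := by
  calc f x + c • w ≤ f x + c • (p ((c⁻¹ • x : f.domain) + v) - f (c⁻¹ • x)) := by
        gcongr
        exact hw _
    _ = p (x + c • v) := by
      rw [LinearPMap.map_smul, Submodule.coe_smul, smul_sub, ← hp_hom c hc, smul_add, smul_smul,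
        smul_smul, mul_inv_cancel₀ hc.ne', one_smul, one_smul]
      abel

variable [IsStrictOrderedRing 𝕜]

theorem DominatedBy.supSpanSingleton
    (hp_hom : ∀ c : 𝕜, 0 < c → ∀ x : V, p (c • x) = c • p x) (hf : f.DominatedBy p)
    {v : V} {w : W} (hv : v ∉ f.domain) (hlo : ∀ x : f.domain, f x - p (x - v) ≤ w)
    (hhi : ∀ x : f.domain, w ≤ p (x + v) - f x) :
    (f.supSpanSingleton v w hv).DominatedBy p := by
  rintro ⟨_, hz⟩
  obtain ⟨x, hx, _, hy, rfl⟩ := mem_sup.1 hz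
  obtain ⟨t, rfl⟩ := mem_span_singleton.1 hy
  rw [supSpanSingleton_apply_mk _ _ _ _ _ hx, RingHom.id_apply]
  rcases lt_trichotomy t 0 with ht | rfl | ht
  · -- the lower bound for `w` is the upper bound for `-w` along `-v`
    have hlo' : ∀ x : f.domain, -w ≤ p (x + -v) - f x := fun x => by
      rw [← sub_eq_add_neg, _root_.neg_le, neg_sub]
      exact hlo x
    simpa using add_smul_le_of_le_sub hp_hom hlo' ⟨x, hx⟩ (neg_pos.2 ht)
  · simpa using hf ⟨x, hx⟩
  · exact add_smul_le_of_le_sub hp_hom hhi ⟨x, hx⟩ ht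

theorem DominatedBy.exists_lt (hinterp : HasInterpolationProperty W)
    (hp_hom : ∀ c : 𝕜, 0 < c → ∀ x : V, p (c • x) = c • p x)
    (hp_add : ∀ x y : V, p (x + y) ≤ p x + p y) (hf : f.DominatedBy p) (hdom : f.domain ≠ ⊤) :
    ∃ g, f < g ∧ g.DominatedBy p := by
  obtain ⟨v, -, hv⟩ := SetLike.exists_of_lt (lt_top_iff_ne_top.2 hdom)
  obtain ⟨w, hlo, hhi⟩ := hinterp (range fun x : f.domain => f x - p (x - v))
    (range fun x : f.domain => p (x + v) - f x) (range_nonempty _) (range_nonempty _)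
    (by rintro _ ⟨x, rfl⟩ _ ⟨y, rfl⟩; exact hf.sub_le_sub hp_add v x y)
  exact ⟨_, f.lt_supSpanSingleton w hv, hf.supSpanSingleton hp_hom hv
    (fun x => hlo _ ⟨x, rfl⟩) (fun x => hhi _ ⟨x, rfl⟩)⟩

theorem DominatedBy.exists_le_domain_eq_top (hinterp : HasInterpolationProperty W)
    (hp_hom : ∀ c : 𝕜, 0 < c → ∀ x : V, p (c • x) = c • p x)
    (hp_add : ∀ x y : V, p (x + y) ≤ p x + p y) (hf : f.DominatedBy p) :
    ∃ g, f ≤ g ∧ g.domain = ⊤ ∧ g.DominatedBy p := by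
  obtain ⟨g, hfg, hg⟩ := zorn_le_nonempty₀ {g : V →ₗ.[𝕜] W | g.DominatedBy p}
    (fun c hc hchain y hy => ⟨_, DominatedBy.sSup ⟨y, hy⟩ hchain.directedOn hc,
      fun _ => LinearPMap.le_sSup hchain.directedOn⟩) f hf
  refine ⟨g, hfg, ?_, hg.1⟩
  by_contra hdom
  obtain ⟨g', hgg', hg'⟩ := hg.1.exists_lt hinterp hp_hom hp_add hdom
  exact hgg'.not_ge (hg.2 hg' hgg'.le)

theorem DominatedBy.exists_linearMap_extension (hinterp : HasInterpolationProperty W)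
    (hp_hom : ∀ c : 𝕜, 0 < c → ∀ x : V, p (c • x) = c • p x)
    (hp_add : ∀ x y : V, p (x + y) ≤ p x + p y) (hf : f.DominatedBy p) :
    ∃ g : V →ₗ[𝕜] W, (∀ x : f.domain, g x = f x) ∧ ∀ x : V, g x ≤ p x := by
  obtain ⟨⟨g_dom, g⟩, hfg, hg_top, hg⟩ := hf.exists_le_domain_eq_top hinterp hp_hom hp_add
  obtain rfl : g_dom = ⊤ := hg_top
  exact ⟨g.comp (LinearMap.id.codRestrict ⊤ fun _ => trivial), fun x => (hfg.2 rfl).symm,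
    fun x => hg ⟨x, trivial⟩⟩

end Ordered

end LinearPMap

/-- the Hahn–Banach–Kantorovich theorem. If the ordered vector space `W` has
the interpolation property, then a linear map `φ : U → W` on a subspace `U ⊆ V` dominated by
a sublinear map `p : V → W` extends linearly to all of `V`, still dominated by `p`. -/
theorem hahn_banach_kantorovich {V W : Type*}
    [AddCommGroup V] [Module ℝ V]
    [AddCommGroup W] [PartialOrder W] [IsOrderedAddMonoid W] [Module ℝ W] [PosSMulMono ℝ W]
    (hinterp : ∀ A B : Set W, A.Nonempty → B.Nonempty →
      (∀ a ∈ A, ∀ b ∈ B, a ≤ b) → ∃ w : W, (∀ a ∈ A, a ≤ w) ∧ ∀ b ∈ B, w ≤ b)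
    (U : Submodule ℝ V) (φ : U →ₗ[ℝ] W) (p : V → W)
    (hp_hom : ∀ c : ℝ, 0 ≤ c → ∀ v : V, p (c • v) = c • p v)
    (hp_add : ∀ v₁ v₂ : V, p (v₁ + v₂) ≤ p v₁ + p v₂)
    (hφp : ∀ u : U, φ u ≤ p u) :
    ∃ ψ : V →ₗ[ℝ] W, (∀ u : U, ψ u = φ u) ∧ ∀ v : V, ψ v ≤ p v :=
  LinearPMap.DominatedBy.exists_linearMap_extension (f := ⟨U, φ⟩) hinterp
    (fun c hc => hp_hom c hc.le) hp_add hφp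
end
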